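/- Suppose n ≥ 2k - a, k ≥ 2, (n,a) ≠ (2k,0), it is not the case that n = 2k = 4a > 0, and it is not the case that n = k+1 = a+2. Then J(n,k,a) has no isolated vertices and no twins, and consequently B(J(n,k,a)) ≥ 3. -/

import Mathlib

/-- A vertex is (eventually) black in the zero forcing process started
from the initial black set `B`: either it is in `B`, or some black vertex
has it as its unique white neighbor. -/
inductive SimpleGraph.Forced {V : Type*} (G : SimpleGraph V) (B : Set V) : V → Prop
  | init {v : V} : v ∈ B → SimpleGraph.Forced G B v
  | force {u w : V} : SimpleGraph.Forced G B u → G.Adj u w →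
      (∀ x, G.Adj u x → x ≠ w → SimpleGraph.Forced G B x) → SimpleGraph.Forced G B w

/-- `B` is a zero forcing set: the process colors every vertex black. -/
def SimpleGraph.IsZeroForcing {V : Type*} (G : SimpleGraph V) (B : Set V) : Prop :=
  ∀ v, G.Forced B v

/-- `W` is a zero blocking set: its complement is a failed zero forcing set. -/
def SimpleGraph.IsZeroBlocking {V : Type*} (G : SimpleGraph V) (W : Set V) : Prop :=
  ¬ G.IsZeroForcing Wᶜ

/-- The zero blocking number `B(G)`: minimum size of a zero blocking set. -/
noncomputable def SimpleGraph.zeroBlockingNumber {V : Type*} (G : SimpleGraph V) : ℕ :=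
  sInf {m | ∃ W : Set V, G.IsZeroBlocking W ∧ W.ncard = m}

/-- The failed zero forcing number `F(G)`: maximum size of a failed zero forcing set. -/
noncomputable def SimpleGraph.failedZeroForcingNumber {V : Type*} (G : SimpleGraph V) : ℕ :=
  sSup {m | ∃ B : Set V, ¬ G.IsZeroForcing B ∧ B.ncard = m}

/-- The generalized Kneser graph `K(n,k,a)`: vertices are the `k`-subsets of `[n]`,
`A` adjacent to `B` iff `A ≠ B` and `|A ∩ B| ≤ a`. -/
def genKneser (n k a : ℕ) : SimpleGraph {s : Finset (Fin n) // s.card = k} where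
  Adj A B := A ≠ B ∧ ((A : Finset (Fin n)) ∩ (B : Finset (Fin n))).card ≤ a
  symm := ⟨fun A B ⟨h1, h2⟩ => ⟨h1.symm, by rwa [Finset.inter_comm]⟩⟩
  loopless := ⟨fun A h => h.1 rfl⟩

/-- The generalized Johnson graph `J(n,k,a)`: vertices are the `k`-subsets of `[n]`,
`A` adjacent to `B` iff `A ≠ B` and `|A ∩ B| = a`. -/
def genJohnson (n k a : ℕ) : SimpleGraph {s : Finset (Fin n) // s.card = k} where
  Adj A B := A ≠ B ∧ ((A : Finset (Fin n)) ∩ (B : Finset (Fin n))).card = a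
  symm := ⟨fun A B ⟨h1, h2⟩ => ⟨h1.symm, by rwa [Finset.inter_comm]⟩⟩
  loopless := ⟨fun A h => h.1 rfl⟩


lemma pair_force {V : Type*} (G : SimpleGraph V) (w₁ w₂ u : V) (h12 : w₁ ≠ w₂)
    (hu1 : u ≠ w₁) (hu2 : u ≠ w₂) (ha1 : G.Adj u w₁) (ha2 : ¬ G.Adj u w₂)
    (hiso : ∀ v, ∃ x, G.Adj v x) :
    G.IsZeroForcing (({w₁, w₂} : Set V)ᶜ) := by
  have hmem : ∀ x : V, x ≠ w₁ → x ≠ w₂ → x ∈ (({w₁, w₂} : Set V)ᶜ) := by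
    intro x hx1 hx2
    simp [hx1, hx2]
  have hw1 : G.Forced (({w₁, w₂} : Set V)ᶜ) w₁ := by
    refine SimpleGraph.Forced.force (.init (hmem u hu1 hu2)) ha1 ?_
    intro x hx hxw
    exact .init (hmem x hxw (fun e => ha2 (e ▸ hx)))
  intro v
  by_cases hv1 : v = w₁
  · exact hv1 ▸ hw1
  by_cases hv2 : v = w₂
  · subst hv2
    obtain ⟨z, hz⟩ := hiso v
    have hzv : z ≠ v := hz.ne'
    have hzf : G.Forced (({w₁, v} : Set V)ᶜ) z := by
      by_cases hz1 : z = w₁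
      · exact hz1 ▸ hw1
      · exact .init (hmem z hz1 hzv)
    refine .force hzf hz.symm ?_
    intro x hx hxv
    by_cases hx1 : x = w₁
    · exact hx1 ▸ hw1
    · exact .init (hmem x hx1 hxv)
  · exact .init (hmem v hv1 hv2)

lemma forcing_of_small {V : Type*} [Finite V] (G : SimpleGraph V)
    (hiso : ∀ v, ∃ u, G.Adj v u)
    (htwin : ∀ x y : V, x ≠ y →
      ¬(G.neighborSet x = G.neighborSet y ∨
        insert x (G.neighborSet x) = insert y (G.neighborSet y)))
    (W : Set V) (hW : W.ncard ≤ 2) : G.IsZeroForcing Wᶜ := by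
  have hWfin : W.Finite := Set.toFinite W
  interval_cases h0 : W.ncard
  · have : W = ∅ := (Set.ncard_eq_zero hWfin).mp h0
    subst this
    intro v
    exact .init (by simp)
  · obtain ⟨w, rfl⟩ := Set.ncard_eq_one.mp h0
    intro v
    by_cases hv : v = w
    · subst hv
      obtain ⟨u, hu⟩ := hiso v
      refine .force (.init (by simp [hu.ne'])) hu.symm ?_
      intro x hx hxv
      exact .init (by simp [hxv])
    · exact .init (by simp [hv])
  · obtain ⟨w₁, w₂, h12, rfl⟩ := Set.ncard_eq_two.mp h0
    by_cases hex : ∃ u, u ≠ w₁ ∧ u ≠ w₂ ∧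
        ((G.Adj u w₁ ∧ ¬ G.Adj u w₂) ∨ (G.Adj u w₂ ∧ ¬ G.Adj u w₁))
    · obtain ⟨u, hu1, hu2, hc⟩ := hex
      rcases hc with ⟨h1, h2⟩ | ⟨h1, h2⟩
      · exact pair_force G w₁ w₂ u h12 hu1 hu2 h1 h2 hiso
      · rw [Set.pair_comm]
        exact pair_force G w₂ w₁ u h12.symm hu2 hu1 h1 h2 hiso
    · exfalso
      have key : ∀ x, x ≠ w₁ → x ≠ w₂ → (G.Adj w₁ x ↔ G.Adj w₂ x) := by
        intro x hx1 hx2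
        constructor
        · intro h
          by_contra hc
          exact hex ⟨x, hx1, hx2, Or.inl ⟨h.symm, fun h' => hc h'.symm⟩⟩
        · intro h
          by_contra hc
          exact hex ⟨x, hx1, hx2, Or.inr ⟨h.symm, fun h' => hc h'.symm⟩⟩
      by_cases hadj : G.Adj w₁ w₂
      · refine htwin w₁ w₂ h12 (Or.inr ?_)
        ext x
        simp only [Set.mem_insert_iff, SimpleGraph.mem_neighborSet]
        by_cases hx1 : x = w₁
        · subst hx1
          simp [h12, hadj.symm]
        by_cases hx2 : x = w₂
        · subst hx2
          simp [h12.symm, hadj]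
        · simp [hx1, hx2, key x hx1 hx2]
      · refine htwin w₁ w₂ h12 (Or.inl ?_)
        ext x
        simp only [SimpleGraph.mem_neighborSet]
        by_cases hx1 : x = w₁
        · subst hx1
          exact ⟨fun h => absurd h (G.irrefl), fun h => absurd h.symm hadj⟩
        by_cases hx2 : x = w₂
        · subst hx2
          exact ⟨fun h => absurd h hadj, fun h => absurd h (G.irrefl)⟩
        · exact key x hx1 hx2

lemma blocking_ge_three {V : Type*} [Finite V] [Nonempty V] (G : SimpleGraph V)
    (hiso : ∀ v, ∃ u, G.Adj v u)
    (htwin : ∀ x y : V, x ≠ y →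
      ¬(G.neighborSet x = G.neighborSet y ∨
        insert x (G.neighborSet x) = insert y (G.neighborSet y))) :
    3 ≤ G.zeroBlockingNumber := by
  have hnof : ∀ v, ¬ G.Forced (∅ : Set V) v := by
    intro v h
    induction h with
    | init h => simp at h
    | force _ _ _ ih => exact ih
  refine le_csInf ⟨(Set.univ : Set V).ncard, Set.univ, ?_, rfl⟩ ?_
  · intro hf
    obtain ⟨v⟩ := ‹Nonempty V›
    have := hf v
    rw [Set.compl_univ] at this
    exact hnof v this
  · rintro m ⟨W, hblock, rfl⟩
    by_contra hlt
    exact hblock (forcing_of_small G hiso htwin W (by omega))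

section aux


lemma build_config {n : ℕ} (A B : Finset (Fin n)) (i j l m : ℕ)
    (hi : i ≤ (A ∩ B).card) (hj : j ≤ (A \ B).card) (hl : l ≤ (B \ A).card)
    (hm : m ≤ ((A ∪ B)ᶜ).card) :
    ∃ C : Finset (Fin n), C.card = i + j + l + m ∧ (C ∩ A).card = i + j ∧
      (C ∩ B).card = i + l := by
  obtain ⟨Si, hSiP, hSic⟩ := Finset.exists_subset_card_eq hi
  obtain ⟨Sj, hSjP, hSjc⟩ := Finset.exists_subset_card_eq hj
  obtain ⟨Sl, hSlP, hSlc⟩ := Finset.exists_subset_card_eq hl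
  obtain ⟨Sm, hSmP, hSmc⟩ := Finset.exists_subset_card_eq hm
  have dAc : Disjoint A (A ∪ B)ᶜ := disjoint_compl_right.mono_left Finset.subset_union_left
  have dBc : Disjoint B (A ∪ B)ᶜ := disjoint_compl_right.mono_left Finset.subset_union_right
  have dij : Disjoint Si Sj :=
    (Finset.disjoint_sdiff (s := B) (t := A)).mono (hSiP.trans Finset.inter_subset_right) hSjP
  have dil : Disjoint Si Sl :=
    (Finset.disjoint_sdiff (s := A) (t := B)).mono (hSiP.trans Finset.inter_subset_left) hSlP
  have dim : Disjoint Si Sm :=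
    (dAc.mono (hSiP.trans Finset.inter_subset_left) hSmP)
  have djl : Disjoint Sj Sl :=
    ((Finset.disjoint_sdiff (s := B) (t := A)).symm.mono hSjP
      (hSlP.trans Finset.sdiff_subset))
  have djm : Disjoint Sj Sm := dAc.mono (hSjP.trans Finset.sdiff_subset) hSmP
  have dlm : Disjoint Sl Sm := dBc.mono (hSlP.trans Finset.sdiff_subset) hSmP
  have hSiA : Si ∩ A = Si := Finset.inter_eq_left.mpr (hSiP.trans Finset.inter_subset_left)
  have hSjA : Sj ∩ A = Sj := Finset.inter_eq_left.mpr (hSjP.trans Finset.sdiff_subset)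
  have hSlA : Sl ∩ A = ∅ := Finset.disjoint_iff_inter_eq_empty.mp
    ((Finset.sdiff_disjoint (s := A) (t := B)).mono_left hSlP)
  have hSmA : Sm ∩ A = ∅ := Finset.disjoint_iff_inter_eq_empty.mp (dAc.symm.mono_left hSmP)
  have hSiB : Si ∩ B = Si := Finset.inter_eq_left.mpr (hSiP.trans Finset.inter_subset_right)
  have hSjB : Sj ∩ B = ∅ := Finset.disjoint_iff_inter_eq_empty.mp
    ((Finset.sdiff_disjoint (s := B) (t := A)).mono_left hSjP)
  have hSlB : Sl ∩ B = Sl := Finset.inter_eq_left.mpr (hSlP.trans Finset.sdiff_subset)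
  have hSmB : Sm ∩ B = ∅ := Finset.disjoint_iff_inter_eq_empty.mp (dBc.symm.mono_left hSmP)
  refine ⟨Si ∪ Sj ∪ Sl ∪ Sm, ?_, ?_, ?_⟩
  · rw [Finset.card_union_of_disjoint, Finset.card_union_of_disjoint,
      Finset.card_union_of_disjoint dij, hSic, hSjc, hSlc, hSmc]
    · exact Finset.disjoint_union_left.mpr ⟨dil, djl⟩
    · exact Finset.disjoint_union_left.mpr
        ⟨Finset.disjoint_union_left.mpr ⟨dim, djm⟩, dlm⟩
  · rw [Finset.union_inter_distrib_right, Finset.union_inter_distrib_right,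
      Finset.union_inter_distrib_right, hSiA, hSjA, hSlA, hSmA, Finset.union_empty,
      Finset.union_empty, Finset.card_union_of_disjoint dij, hSic, hSjc]
  · rw [Finset.union_inter_distrib_right, Finset.union_inter_distrib_right,
      Finset.union_inter_distrib_right, hSiB, hSjB, hSlB, hSmB, Finset.union_empty,
      Finset.union_empty, Finset.card_union_of_disjoint dil, hSic, hSlc]


lemma arith_config (n k a t : ℕ) (hak : a < k) (hkn : k ≤ n) (hk : 2 ≤ k)
    (hn : 2 * k ≤ n + a)
    (h1 : ¬ (n = 2 * k ∧ a = 0))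
    (h2 : ¬ (n = 2 * k ∧ n = 4 * a ∧ 0 < a))
    (h3 : ¬ (n = k + 1 ∧ n = a + 2))
    (ht1 : t < k) (ht2 : 2 * k ≤ n + t) :
    ∃ i j l m : ℕ, i + j = a ∧ i + l ≠ a ∧ i ≤ t ∧ j + t ≤ k ∧ l + t ≤ k ∧
      i + j + l + m = k ∧ m + 2 * k ≤ n + t ∧ ¬(i = t ∧ l + t = k ∧ j = 0 ∧ m = 0) := by
  rcases lt_trichotomy t a with h | h | h
  · rcases eq_or_ne (t + k) (2 * a) with h' | h'
    · rcases eq_or_lt_of_le (show 3 * k ≤ n + 2 * a by omega) with h'' | h''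
      · exact ⟨2 * a - k - 1, k - a + 1, k - a, 0, by omega, by omega, by omega, by omega,
          by omega, by omega, by omega, by omega⟩
      · exact ⟨t, a - t, k - a - 1, 1, by omega, by omega, by omega, by omega,
          by omega, by omega, by omega, by omega⟩
    · exact ⟨t, a - t, k - a, 0, by omega, by omega, by omega, by omega,
        by omega, by omega, by omega, by omega⟩
  · rcases eq_or_lt_of_le hn with h' | h'
    · exact ⟨a - 1, 1, k - a, 0, by omega, by omega, by omega, by omega,
        by omega, by omega, by omega, by omega⟩
    · rcases eq_or_ne a (k - 1) with h'' | h''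
      · exact ⟨a - 1, 1, 0, 1, by omega, by omega, by omega, by omega,
          by omega, by omega, by omega, by omega⟩
      · exact ⟨a, 0, k - a - 1, 1, by omega, by omega, by omega, by omega,
          by omega, by omega, by omega, by omega⟩
  · exact ⟨a, 0, k - t, t - a, by omega, by omega, by omega, by omega,
      by omega, by omega, by omega, by omega⟩

lemma distinguishing (n k a : ℕ) (hak : a < k) (hkn : k ≤ n) (hk : 2 ≤ k)
    (hn : 2 * k ≤ n + a)
    (h1 : ¬ (n = 2 * k ∧ a = 0))
    (h2 : ¬ (n = 2 * k ∧ n = 4 * a ∧ 0 < a))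
    (h3 : ¬ (n = k + 1 ∧ n = a + 2))
    (A B : Finset (Fin n)) (hA : A.card = k) (hB : B.card = k) (hAB : A ≠ B) :
    ∃ C : Finset (Fin n), C.card = k ∧ C ≠ A ∧ C ≠ B ∧ (C ∩ A).card = a ∧
      (C ∩ B).card ≠ a := by
  set t := (A ∩ B).card with ht
  have htk : t ≤ k := hA ▸ Finset.card_le_card Finset.inter_subset_left
  have ht1 : t < k := by
    rcases lt_or_eq_of_le htk with h | h
    · exact h
    · exfalso
      have h4 : A ∩ B = A := Finset.eq_of_subset_of_card_le Finset.inter_subset_left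
        (by omega)
      have h5 : A ⊆ B := by rw [← h4]; exact Finset.inter_subset_right
      exact hAB (Finset.eq_of_subset_of_card_le h5 (by omega))
  have hcu : (A ∪ B).card + t = 2 * k := by
    have := Finset.card_inter_add_card_union A B
    omega
  have hun : (A ∪ B).card ≤ n := le_trans (Finset.card_le_univ _)
    (by simp)
  have ht2 : 2 * k ≤ n + t := by omega
  have hAd : (A \ B).card + t = k := by
    have := Finset.card_sdiff_add_card_inter A B
    omega
  have hBd : (B \ A).card + t = k := by
    have h6 := Finset.card_sdiff_add_card_inter B A
    rw [Finset.inter_comm] at h6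
    omega
  have hcc : ((A ∪ B)ᶜ).card + (A ∪ B).card = n := by
    rw [Finset.card_compl]
    simp only [Fintype.card_fin]
    omega
  obtain ⟨i, j, l, m, e1, e2, e3, e4, e5, e6, e7, e8⟩ :=
    arith_config n k a t hak hkn hk hn h1 h2 h3 ht1 ht2
  obtain ⟨C, hC1, hC2, hC3⟩ := build_config A B i j l m (by omega) (by omega) (by omega)
    (by omega)
  refine ⟨C, by omega, ?_, ?_, by omega, by omega⟩
  · intro h
    rw [h, Finset.inter_self, hA] at hC2
    omega
  · intro h
    rw [h, Finset.inter_self, hB] at hC3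
    have hi2 : i ≤ t := e3
    have hl2 : l + t ≤ k := e5
    exact e8 ⟨by omega, by omega, by omega, by omega⟩
end aux

theorem stmt16 (n k a : ℕ) (hak : a < k) (hkn : k ≤ n) (hk : 2 ≤ k)
    (hn : 2 * k ≤ n + a)
    (h1 : ¬ (n = 2 * k ∧ a = 0))
    (h2 : ¬ (n = 2 * k ∧ n = 4 * a ∧ 0 < a))
    (h3 : ¬ (n = k + 1 ∧ n = a + 2)) :
    (∀ A : {s : Finset (Fin n) // s.card = k}, ∃ B, (genJohnson n k a).Adj A B) ∧
    (¬ ∃ A B : {s : Finset (Fin n) // s.card = k}, A ≠ B ∧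
      ((genJohnson n k a).neighborSet A = (genJohnson n k a).neighborSet B ∨
        insert A ((genJohnson n k a).neighborSet A) =
          insert B ((genJohnson n k a).neighborSet B))) ∧
    3 ≤ (genJohnson n k a).zeroBlockingNumber := by
  have hiso : ∀ A : {s : Finset (Fin n) // s.card = k}, ∃ B, (genJohnson n k a).Adj A B := by
    intro A
    have hAc : (A.1 ∩ A.1).card = k := by rw [Finset.inter_self]; exact A.2
    have hcompl : ((A.1 ∪ A.1)ᶜ).card = n - k := by
      rw [Finset.union_self, Finset.card_compl, Fintype.card_fin, A.2]
    obtain ⟨C, hC1, hC2, _⟩ := build_config A.1 A.1 a 0 0 (k - a)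
      (by omega) (by omega) (by omega) (by omega)
    have hCk : C.card = k := by omega
    refine ⟨⟨C, hCk⟩, ?_, ?_⟩
    · intro h
      have : A.1 = C := congrArg Subtype.val h
      rw [← this, Finset.inter_self, A.2] at hC2
      omega
    · show (A.1 ∩ C).card = a
      rw [Finset.inter_comm]
      omega
  refine ⟨hiso, ?_, ?_⟩
  · rintro ⟨A, B, hAB, hc⟩
    obtain ⟨C, hCk, hCA, hCB, hC4, hC5⟩ := distinguishing n k a hak hkn hk hn h1 h2 h3
      A.1 B.1 A.2 B.2 (fun h => hAB (Subtype.ext h))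
    set Cv : {s : Finset (Fin n) // s.card = k} := ⟨C, hCk⟩ with hCv
    have hadjA : (genJohnson n k a).Adj A Cv := by
      refine ⟨fun h => hCA ?_, ?_⟩
      · exact (congrArg Subtype.val h).symm
      · show (A.1 ∩ C).card = a
        rw [Finset.inter_comm]
        exact hC4
    have hnadjB : ¬ (genJohnson n k a).Adj B Cv := by
      rintro ⟨-, h⟩
      rw [show ((B : Finset (Fin n)) ∩ (Cv : Finset (Fin n))) = B.1 ∩ C from rfl,
        Finset.inter_comm] at h
      exact hC5 h
    rcases hc with hopen | hclosed
    · have hmem : Cv ∈ (genJohnson n k a).neighborSet A := hadjA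
      rw [hopen] at hmem
      exact hnadjB hmem
    · have hmem : Cv ∈ insert A ((genJohnson n k a).neighborSet A) :=
        Set.mem_insert_of_mem _ hadjA
      rw [hclosed] at hmem
      rcases hmem with h | h
      · exact hCB (congrArg Subtype.val h)
      · exact hnadjB h
  · have : Nonempty {s : Finset (Fin n) // s.card = k} := by
      obtain ⟨S, -, hS⟩ := Finset.exists_subset_card_eq
        (s := (Finset.univ : Finset (Fin n))) (n := k) (by simp [hkn])
      exact ⟨⟨S, hS⟩⟩
    refine blocking_ge_three _ hiso ?_
    · intro x y hxy hc
      obtain ⟨C, hCk, hCA, hCB, hC4, hC5⟩ := distinguishing n k a hak hkn hk hn h1 h2 h3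
        x.1 y.1 x.2 y.2 (fun h => hxy (Subtype.ext h))
      set Cv : {s : Finset (Fin n) // s.card = k} := ⟨C, hCk⟩ with hCv
      have hadjA : (genJohnson n k a).Adj x Cv := by
        refine ⟨fun h => hCA (congrArg Subtype.val h).symm, ?_⟩
        show (x.1 ∩ C).card = a
        rw [Finset.inter_comm]
        exact hC4
      have hnadjB : ¬ (genJohnson n k a).Adj y Cv := by
        rintro ⟨-, h⟩
        rw [show ((y : Finset (Fin n)) ∩ (Cv : Finset (Fin n))) = y.1 ∩ C from rfl,
          Finset.inter_comm] at h
        exact hC5 h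
      rcases hc with hopen | hclosed
      · have hmem : Cv ∈ (genJohnson n k a).neighborSet x := hadjA
        rw [hopen] at hmem
        exact hnadjB hmem
      · have hmem : Cv ∈ insert x ((genJohnson n k a).neighborSet x) :=
          Set.mem_insert_of_mem _ hadjA
        rw [hclosed] at hmem
        rcases hmem with h | h
        · exact hCB (congrArg Subtype.val h)
        · exact hnadjB h
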